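/- Let ρ, κ > 0 and let m(v,w) = (2π/√(ρκ)) exp((ρ v² + κ w²)/2) on ℝ². Then every function ν : ℝ² → ℝ possessing a weak derivative ∂_w ν and satisfying ∫_{ℝ²} (|ν|² + |∂_w ν|²) m du < +∞ obeys the two inequalities: ‖ν‖_{L²(m)} ≤ κ^{−1/2} ‖∂_w ν‖_{L²(m)} and ‖w ν‖_{L²(m)} ≤ (2/κ) ‖∂_w ν‖_{L²(m)}. -/

import Mathlib

/-! On each slice `v = const` the weight `W w = m (v, w)` solves `W' = κ w W`, so for
`h = g² W` one has `(w h)' = g² W + 2 w g g' W + κ (w g)² W`. This gives the pointwise bounds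
`κ g² W ≤ g'² W + κ (w h)'` and `κ² (w g)² W ≤ 4 g'² W + 2 κ (w h)'`, whose defects are
`(g' + κ w g)² W` and `((2 g' + κ w g)² + 2 κ g²) W`. Integrating over `[-R, R]` leaves the boundary
term `R (h R + h (-R))`, which tends to `0` along some `R → ∞` because `h` is integrable, and Fubini
integrates the slice inequalities over `v`. -/

open MeasureTheory Real

noncomputable section

/-- The weight `m(v,w) = (2π/√(ρκ)) exp((ρv² + κw²)/2)`. -/
noncomputable def weightM (ρ κ : ℝ) (u : ℝ × ℝ) : ℝ :=
  (2 * Real.pi / Real.sqrt (ρ * κ)) * Real.exp ((ρ * u.1 ^ 2 + κ * u.2 ^ 2) / 2)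

open Filter Set Topology

lemma exists_le_mul_lt_of_integrableOn_Ioi {s : ℝ → ℝ} {a ε : ℝ} (hs : IntegrableOn s (Ioi a))
    (ha : 0 < a) (hε : 0 < ε) : ∃ r, a ≤ r ∧ r * s r < ε := by
  by_contra! hcon
  refine not_integrableOn_Ioi_inv (a := a) ((hs.const_mul ε⁻¹).mono'
    measurable_inv.aestronglyMeasurable ?_)
  filter_upwards [ae_restrict_mem measurableSet_Ioi] with x hx
  have hx0 : 0 < x := ha.trans hx
  rw [norm_inv, Real.norm_of_nonneg hx0.le, inv_le_iff_one_le_mul₀ hx0]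
  calc 1 = ε⁻¹ * ε := (inv_mul_cancel₀ hε.ne').symm
    _ ≤ ε⁻¹ * (x * s x) := by gcongr; exact hcon x hx.le
    _ = ε⁻¹ * s x * x := by ring

lemma exists_seq_tendsto_atTop_mul_tendsto_zero {s : ℝ → ℝ} (hs : IntegrableOn s (Ioi 0))
    (hs0 : ∀ x, 0 ≤ s x) :
    ∃ R : ℕ → ℝ, Tendsto R atTop atTop ∧ Tendsto (fun n => R n * s (R n)) atTop (𝓝 0) := by
  have key (n : ℕ) : ∃ r, (n : ℝ) + 1 ≤ r ∧ r * s r < 1 / ((n : ℝ) + 1) :=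
    exists_le_mul_lt_of_integrableOn_Ioi (hs.mono_set (Ioi_subset_Ioi (by positivity)))
      (by positivity) (by positivity)
  choose R hR hRs using key
  refine ⟨R, tendsto_atTop_mono hR (tendsto_atTop_add_const_right _ 1 tendsto_natCast_atTop_atTop),
    squeeze_zero (fun n => mul_nonneg (by linarith [hR n, n.cast_nonneg (α := ℝ)]) (hs0 _))
      (fun n => (hRs n).le) tendsto_one_div_add_atTop_nhds_zero_nat⟩

lemma integrable_and_integral_le_of_le_add_deriv {F P G D : ℝ → ℝ} {R : ℕ → ℝ}
    (hF : Continuous F) (hF0 : ∀ x, 0 ≤ F x) (hP : Integrable P)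
    (hG : ∀ x, HasDerivAt G (D x) x) (hFP : ∀ x, F x ≤ P x + D x)
    (hR : Tendsto R atTop atTop) (hGR : Tendsto (fun n => G (R n) - G (-R n)) atTop (𝓝 0)) :
    Integrable F ∧ ∫ x, F x ≤ ∫ x, P x := by
  have hRneg : Tendsto (fun n => -R n) atTop atBot := tendsto_neg_atTop_atBot.comp hR
  have hbound : ∀ᶠ n in atTop,
      ∫ x in -R n..R n, F x ≤ (∫ x in -R n..R n, P x) + (G (R n) - G (-R n)) := by
    filter_upwards [hR.eventually_ge_atTop 0] with n hn
    have hFP' := intervalIntegral.integral_le_sub_of_hasDeriv_right_of_le (a := -R n) (b := R n)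
      (φ := fun x => F x - P x) (by linarith)
      (Differentiable.continuous fun x => (hG x).differentiableAt).continuousOn
      (fun x _ => (hG x).hasDerivWithinAt)
      ((hF.integrableOn_Icc).sub hP.integrableOn) (fun x _ => by linarith [hFP x])
    rw [intervalIntegral.integral_sub (hF.intervalIntegrable _ _) hP.intervalIntegrable] at hFP'
    linarith
  have hlim : Tendsto (fun n => (∫ x in -R n..R n, P x) + (G (R n) - G (-R n))) atTop
      (𝓝 (∫ x, P x)) := by
    simpa using (intervalIntegral_tendsto_integral hP hRneg hR).add hGR
  have hFint : Integrable F := by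
    refine integrable_of_intervalIntegral_norm_bounded ((∫ x, P x) + 1)
      (fun n => hF.integrableOn_Ioc) hRneg hR ?_
    filter_upwards [hbound, hlim.eventually (eventually_le_nhds (lt_add_one _))] with n h₁ h₂
    simp only [Real.norm_of_nonneg (hF0 _)]
    linarith
  exact ⟨hFint, le_of_tendsto_of_tendsto (intervalIntegral_tendsto_integral hFint hRneg hR) hlim
    (hbound.mono fun _ h => h)⟩

section WeightedPoincare

variable {κ : ℝ} {W g : ℝ → ℝ}

lemma hasDerivAt_mul_sq_mul (hW : ∀ w, HasDerivAt W (κ * w * W w) w) (hg : Differentiable ℝ g)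
    (w : ℝ) :
    HasDerivAt (fun w => w * (g w ^ 2 * W w))
      (g w ^ 2 * W w + 2 * w * g w * deriv g w * W w + κ * (w * g w) ^ 2 * W w) w :=
  ((hasDerivAt_id' w).fun_mul (((hg w).hasDerivAt.fun_pow 2).fun_mul (hW w))).congr_deriv
    (by norm_num; ring)

lemma exists_seq_boundary_term_tendsto_zero (hW0 : ∀ w, 0 ≤ W w)
    (hIg : Integrable (fun w => g w ^ 2 * W w)) :
    ∃ R : ℕ → ℝ, Tendsto R atTop atTop ∧ Tendsto (fun n =>
      R n * (g (R n) ^ 2 * W (R n)) - -R n * (g (-R n) ^ 2 * W (-R n))) atTop (𝓝 0) := by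
  obtain ⟨R, hR, hRs⟩ := exists_seq_tendsto_atTop_mul_tendsto_zero
    (s := fun r => g r ^ 2 * W r + g (-r) ^ 2 * W (-r)) (hIg.add hIg.comp_neg).integrableOn
    (fun r => add_nonneg (mul_nonneg (sq_nonneg _) (hW0 r)) (mul_nonneg (sq_nonneg _) (hW0 (-r))))
  exact ⟨R, hR, hRs.congr fun n => by ring⟩

lemma integral_sq_mul_le (hW0 : ∀ w, 0 ≤ W w) (hW : ∀ w, HasDerivAt W (κ * w * W w) w)
    (hg : Differentiable ℝ g) (hIg : Integrable (fun w => g w ^ 2 * W w))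
    (hIg' : Integrable (fun w => deriv g w ^ 2 * W w)) (hκ : 0 < κ) :
    ∫ w, g w ^ 2 * W w ≤ κ⁻¹ * ∫ w, deriv g w ^ 2 * W w := by
  obtain ⟨R, hR, hRG⟩ := exists_seq_boundary_term_tendsto_zero hW0 hIg
  rw [← integral_const_mul]
  have hWc : Continuous W := Differentiable.continuous fun x => (hW x).differentiableAt
  refine (integrable_and_integral_le_of_le_add_deriv (F := fun w => g w ^ 2 * W w)
    ((hg.continuous.pow 2).mul hWc) (fun w => mul_nonneg (sq_nonneg _) (hW0 w))
    (hIg'.const_mul _) (hasDerivAt_mul_sq_mul hW hg) (fun w => ?_) hR hRG).2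
  rw [← sub_nonneg]
  have e : κ⁻¹ * (deriv g w ^ 2 * W w) +
      (g w ^ 2 * W w + 2 * w * g w * deriv g w * W w + κ * (w * g w) ^ 2 * W w) -
      g w ^ 2 * W w = κ⁻¹ * ((deriv g w + κ * w * g w) ^ 2 * W w) := by
    field_simp
    ring
  rw [e]
  exact mul_nonneg (inv_nonneg.2 hκ.le) (mul_nonneg (sq_nonneg _) (hW0 w))

lemma integrable_and_integral_mul_sq_mul_le (hW0 : ∀ w, 0 ≤ W w)
    (hW : ∀ w, HasDerivAt W (κ * w * W w) w) (hg : Differentiable ℝ g)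
    (hIg : Integrable (fun w => g w ^ 2 * W w)) (hIg' : Integrable (fun w => deriv g w ^ 2 * W w))
    (hκ : 0 < κ) :
    Integrable (fun w => (w * g w) ^ 2 * W w) ∧
      ∫ w, (w * g w) ^ 2 * W w ≤ (2 / κ) ^ 2 * ∫ w, deriv g w ^ 2 * W w := by
  obtain ⟨R, hR, hRG⟩ := exists_seq_boundary_term_tendsto_zero hW0 hIg
  rw [← integral_const_mul]
  have hWc : Continuous W := Differentiable.continuous fun x => (hW x).differentiableAt
  refine integrable_and_integral_le_of_le_add_deriv (F := fun w => (w * g w) ^ 2 * W w)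
    (((continuous_id.mul hg.continuous).pow 2).mul hWc) (fun w => mul_nonneg (sq_nonneg _) (hW0 w))
    (hIg'.const_mul _) (fun w => (hasDerivAt_mul_sq_mul hW hg w).const_mul (2 / κ)) (fun w => ?_)
    hR (by simpa only [mul_sub, mul_zero] using hRG.const_mul (2 / κ))
  rw [← sub_nonneg]
  have e : (2 / κ) ^ 2 * (deriv g w ^ 2 * W w) + 2 / κ *
      (g w ^ 2 * W w + 2 * w * g w * deriv g w * W w + κ * (w * g w) ^ 2 * W w) -
      (w * g w) ^ 2 * W w =
      (κ ^ 2)⁻¹ * (((2 * deriv g w + κ * w * g w) ^ 2 + 2 * κ * g w ^ 2) * W w) := by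
    field_simp
    ring
  rw [e]
  have := hW0 w
  positivity

end WeightedPoincare

lemma weightM_nonneg (ρ κ : ℝ) (u : ℝ × ℝ) : 0 ≤ weightM ρ κ u := by
  unfold weightM
  positivity

lemma hasDerivAt_weightM_snd (ρ κ v w : ℝ) :
    HasDerivAt (fun w => weightM ρ κ (v, w)) (κ * w * weightM ρ κ (v, w)) w := by
  have h := ((((hasDerivAt_id' w).fun_pow 2).const_mul κ).const_add (ρ * v ^ 2)).div_const 2
  refine (h.exp.const_mul (2 * π / √(ρ * κ))).congr_deriv ?_
  simp only [weightM]
  push_cast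
  ring

lemma integrable_and_integral_le_of_ae_integral_le {α β : Type*} [MeasurableSpace α]
    [MeasurableSpace β] {μ : Measure α} {ν : Measure β} [SFinite μ] [SFinite ν]
    {f p : α × β → ℝ} {c : ℝ} (hf : AEStronglyMeasurable f (μ.prod ν)) (hf0 : ∀ z, 0 ≤ f z)
    (hp : Integrable p (μ.prod ν))
    (h : ∀ᵐ x ∂μ, Integrable (fun y => f (x, y)) ν ∧
      ∫ y, f (x, y) ∂ν ≤ c * ∫ y, p (x, y) ∂ν) :
    Integrable f (μ.prod ν) ∧ ∫ z, f z ∂(μ.prod ν) ≤ c * ∫ z, p z ∂(μ.prod ν) := by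
  have hfint : Integrable f (μ.prod ν) := by
    refine (integrable_prod_iff hf).2 ⟨h.mono fun _ hx => hx.1, ?_⟩
    refine (hp.integral_prod_left.const_mul c).mono' hf.norm.integral_prod_right' ?_
    filter_upwards [h] with x hx
    simp only [Real.norm_of_nonneg (hf0 _),
      Real.norm_of_nonneg (integral_nonneg fun y => hf0 (x, y))]
    exact hx.2
  refine ⟨hfint, ?_⟩
  rw [integral_prod f hfint, integral_prod p hp, ← integral_const_mul]
  exact integral_mono_ae hfint.integral_prod_left (hp.integral_prod_left.const_mul c)
    (h.mono fun _ hx => hx.2)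

lemma sqrt_le_mul_sqrt_of_le_sq_mul {a x y : ℝ} (ha : 0 ≤ a) (h : x ≤ a ^ 2 * y) :
    √x ≤ a * √y :=
  (Real.sqrt_le_sqrt h).trans_eq (by rw [Real.sqrt_mul (sq_nonneg a), Real.sqrt_sq ha])

theorem stmt13_general (ρ κ : ℝ) (hκ : 0 < κ) (ν : ℝ → ℝ → ℝ)
    -- `ν` possesses a derivative in `w`
    (hdiff : ∀ v : ℝ, Differentiable ℝ (ν v))
    -- `∫ (|ν|² + |∂_w ν|²) m du < +∞`
    (hL2 : Integrable (fun u : ℝ × ℝ => (ν u.1 u.2) ^ 2 * weightM ρ κ u))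
    (hL2d : Integrable (fun u : ℝ × ℝ => (deriv (ν u.1) u.2) ^ 2 * weightM ρ κ u)) :
    Real.sqrt (∫ u : ℝ × ℝ, (ν u.1 u.2) ^ 2 * weightM ρ κ u)
        ≤ κ ^ (-(1 : ℝ) / 2) *
            Real.sqrt (∫ u : ℝ × ℝ, (deriv (ν u.1) u.2) ^ 2 * weightM ρ κ u)
      ∧ Real.sqrt (∫ u : ℝ × ℝ, (u.2 * ν u.1 u.2) ^ 2 * weightM ρ κ u)
        ≤ (2 / κ) *
            Real.sqrt (∫ u : ℝ × ℝ, (deriv (ν u.1) u.2) ^ 2 * weightM ρ κ u) := by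
  rw [Measure.volume_eq_prod] at hL2 hL2d ⊢
  have hslices := hL2.prod_right_ae.and hL2d.prod_right_ae
  have hsq : (κ ^ (-(1 : ℝ) / 2)) ^ 2 = κ⁻¹ := by
    rw [← Real.rpow_natCast, ← Real.rpow_mul hκ.le]
    norm_num [Real.rpow_neg_one]
  constructor
  · refine sqrt_le_mul_sqrt_of_le_sq_mul (by positivity) (hsq ▸ ?_)
    refine (integrable_and_integral_le_of_ae_integral_le hL2.aestronglyMeasurable
      (fun u => mul_nonneg (sq_nonneg _) (weightM_nonneg ρ κ u)) hL2d ?_).2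
    filter_upwards [hslices] with v ⟨hv, hv'⟩
    exact ⟨hv, integral_sq_mul_le (fun w => weightM_nonneg ρ κ (v, w))
      (hasDerivAt_weightM_snd ρ κ v) (hdiff v) hv hv' hκ⟩
  · refine sqrt_le_mul_sqrt_of_le_sq_mul (by positivity) ?_
    have hmeas : AEStronglyMeasurable (fun u : ℝ × ℝ => (u.2 * ν u.1 u.2) ^ 2 * weightM ρ κ u)
        (volume.prod volume) :=
      ((continuous_snd.pow 2).aestronglyMeasurable.mul hL2.aestronglyMeasurable).congr
        (.of_forall fun u => by simp only [Pi.mul_apply, Pi.pow_apply]; ring)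
    refine (integrable_and_integral_le_of_ae_integral_le hmeas
      (fun u => mul_nonneg (sq_nonneg _) (weightM_nonneg ρ κ u)) hL2d ?_).2
    filter_upwards [hslices] with v ⟨hv, hv'⟩
    exact integrable_and_integral_mul_sq_mul_le (fun w => weightM_nonneg ρ κ (v, w))
      (hasDerivAt_weightM_snd ρ κ v) (hdiff v) hv hv' hκ

/-- Poincaré-type inequalities in `L²(m)`: for every `ν` with a (weak)
derivative `∂_w ν` such that `∫ (|ν|² + |∂_w ν|²) m du < ∞`,
`‖ν‖_{L²(m)} ≤ κ^{-1/2} ‖∂_w ν‖_{L²(m)}` and `‖w ν‖_{L²(m)} ≤ (2/κ) ‖∂_w ν‖_{L²(m)}`. -/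
theorem stmt13 (ρ κ : ℝ) (hρ : 0 < ρ) (hκ : 0 < κ) (ν : ℝ → ℝ → ℝ)
    -- `ν` possesses a derivative in `w`
    (hdiff : ∀ v : ℝ, Differentiable ℝ (ν v))
    -- `∫ (|ν|² + |∂_w ν|²) m du < +∞`
    (hL2 : Integrable (fun u : ℝ × ℝ => (ν u.1 u.2) ^ 2 * weightM ρ κ u))
    (hL2d : Integrable (fun u : ℝ × ℝ => (deriv (ν u.1) u.2) ^ 2 * weightM ρ κ u)) :
    Real.sqrt (∫ u : ℝ × ℝ, (ν u.1 u.2) ^ 2 * weightM ρ κ u)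
        ≤ κ ^ (-(1 : ℝ) / 2) *
            Real.sqrt (∫ u : ℝ × ℝ, (deriv (ν u.1) u.2) ^ 2 * weightM ρ κ u)
      ∧ Real.sqrt (∫ u : ℝ × ℝ, (u.2 * ν u.1 u.2) ^ 2 * weightM ρ κ u)
        ≤ (2 / κ) *
            Real.sqrt (∫ u : ℝ × ℝ, (deriv (ν u.1) u.2) ^ 2 * weightM ρ κ u) :=
  stmt13_general ρ κ hκ ν hdiff hL2 hL2d
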